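/- Let T be a tournament and A a subset of V(T) with |A| ≥ 4. Then A is an acyclic component of T if and only if A is a monomorphic component of T. -/

import Mathlib

universe u v

/-- `r` is a tournament relation on `V`: irreflexive and, for distinct vertices,
exactly one of the two directed edges is present. -/
def IsTournament {V : Type u} (r : V → V → Prop) : Prop :=
  (∀ x, ¬ r x x) ∧ ∀ x y : V, x ≠ y → (r x y ↔ ¬ r y x)

/-- A subset `A` is autonomous in the tournament `r`. -/
def Autonomous {V : Type u} (r : V → V → Prop) (A : Set V) : Prop :=
  ∀ x ∈ A, ∀ x' ∈ A, ∀ y ∉ A, (r x y ↔ r x' y)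

/-- A subset `A` is acyclic: it contains no 3-cycle. -/
def AcyclicSet {V : Type u} (r : V → V → Prop) (A : Set V) : Prop :=
  ¬ ∃ a ∈ A, ∃ b ∈ A, ∃ c ∈ A, r a b ∧ r b c ∧ r c a

/-- The acyclic component of a vertex `x`: the union of all acyclic autonomous
subsets containing `x`. -/
def acyclicComponent {V : Type u} (r : V → V → Prop) (x : V) : Set V :=
  ⋃₀ {A : Set V | x ∈ A ∧ Autonomous r A ∧ AcyclicSet r A}

/-- `A` is an acyclic component of the tournament `r`. -/
def IsAcyclicComponent {V : Type u} (r : V → V → Prop) (A : Set V) : Prop :=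
  ∃ x, A = acyclicComponent r x

/-- A tournament is acyclically indecomposable if every acyclic autonomous subset
has at most one element. -/
def AcyclicallyIndecomposable {V : Type u} (r : V → V → Prop) : Prop :=
  ∀ A : Set V, Autonomous r A → AcyclicSet r A → A.Subsingleton

/-- The type of acyclic components of `r`. -/
def AcComp {V : Type u} (r : V → V → Prop) : Type u :=
  {A : Set V // IsAcyclicComponent r A}

/-- The quotient tournament `Ť` on the set of acyclic components. -/
def quotRel {V : Type u} (r : V → V → Prop) : AcComp r → AcComp r → Prop :=
  fun A B => A ≠ B ∧ ∃ x ∈ A.val, ∃ y ∈ B.val, r x y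

/-- The lexicographical sum of the tournaments `rels i` indexed by the tournament `d`. -/
def lexSumRel {I : Type u} {F : I → Type v} (d : I → I → Prop)
    (rels : ∀ i, F i → F i → Prop) : (Σ i, F i) → (Σ i, F i) → Prop :=
  fun p q => (p.1 ≠ q.1 ∧ d p.1 q.1) ∨
    ∃ h : p.1 = q.1, rels q.1 (cast (congrArg F h) p.2) q.2

/-- The subtournaments induced on the finite sets `s` and `t` are isomorphic. -/
def InducedIso {V : Type u} (r : V → V → Prop) (s t : Finset V) : Prop :=
  ∃ e : {x // x ∈ s} ≃ {x // x ∈ t},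
    ∀ a b : {x // x ∈ s}, r a.val b.val ↔ r (e a).val (e b).val

/-- The profile of a tournament: the number of isomorphism classes of subtournaments
induced on `n`-element subsets of the vertex set. -/
noncomputable def profile {V : Type u} (r : V → V → Prop) (n : ℕ) : ℕ :=
  Nat.card (Quot (fun s t : {w : Finset V // w.card = n} => InducedIso r s.val t.val))

/-- `r` is (isomorphic to) a lexicographical sum of acyclic tournaments indexed by a
finite tournament. -/
def IsFiniteLexSumOfAcyclic {V : Type u} (r : V → V → Prop) : Prop :=
  ∃ (I : Type) (d : I → I → Prop) (F : I → Type u)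
    (rels : ∀ i, F i → F i → Prop),
    Finite I ∧ IsTournament d ∧
    (∀ i, IsTournament (rels i) ∧ AcyclicSet (rels i) Set.univ) ∧
    ∃ e : V ≃ (Σ i, F i), ∀ x y, r x y ↔ lexSumRel d rels (e x) (e y)

/-- A bundled tournament (vertex type together with its edge relation). -/
structure Tour : Type 1 where
  V : Type
  rel : V → V → Prop

/-- `S` is embeddable in the tournament `r`: `S` is isomorphic to a subtournament of `r`. -/
def Tour.EmbedsIn {W : Type u} (S : Tour) (r : W → W → Prop) : Prop :=
  ∃ f : S.V → W, Function.Injective f ∧ ∀ x y, S.rel x y ↔ r (f x) (f y)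

/-- The profile of a bundled tournament. -/
noncomputable def Tour.profile (T : Tour) (n : ℕ) : ℕ := _root_.profile T.rel n

/-- The quotient tournament `Ť` of a bundled tournament, on its acyclic components. -/
def Tour.check (T : Tour) : Tour := ⟨AcComp T.rel, quotRel T.rel⟩

/-- The tournament `C3[C]` for an acyclic tournament `C = (A, lt)`. -/
def c3Rel {A : Type} (lt : A → A → Prop) : A × Fin 3 → A × Fin 3 → Prop :=
  fun p q => lt p.1 q.1 ∨ (p.1 = q.1 ∧
    ((p.2 = 0 ∧ q.2 = 1) ∨ (p.2 = 1 ∧ q.2 = 2) ∨ (p.2 = 2 ∧ q.2 = 0)))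

/-- The tournament `V[C]` for an acyclic tournament `C = (A, lt)`; `none` is the extra vertex. -/
def vRel {A : Type} (lt : A → A → Prop) (p q : Option (A × Fin 2)) : Prop :=
  match p, q with
  | some p, some q => lt p.1 q.1 ∨ (p.1 = q.1 ∧ p.2 = 0 ∧ q.2 = 1)
  | none, some q => q.2 = 0
  | some p, none => p.2 = 1
  | none, none => False

/-- The tournament `T[C]` for an acyclic tournament `C = (A, lt)`. -/
def tRel {A : Type} (lt : A → A → Prop) : A × Fin 2 → A × Fin 2 → Prop :=
  fun p q =>
    (p.2 = 0 ∧ q.2 = 0 ∧ lt p.1 q.1) ∨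
    (p.1 = q.1 ∧ p.2 = 0 ∧ q.2 = 1) ∨
    (p.2 = 1 ∧ q.2 = 1 ∧ lt p.1 q.1) ∨
    (p.2 = 1 ∧ q.2 = 0 ∧ lt q.1 p.1) ∨
    (p.2 = 0 ∧ q.2 = 1 ∧ lt q.1 p.1)

/-- The tournament `U[C]` for an acyclic tournament `C = (A, lt)`. -/
def uRel {A : Type} (lt : A → A → Prop) : A × Fin 2 → A × Fin 2 → Prop :=
  fun p q =>
    (p.2 = 0 ∧ q.2 = 0 ∧ lt p.1 q.1) ∨
    (p.1 = q.1 ∧ p.2 = 0 ∧ q.2 = 1) ∨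
    (p.2 = 1 ∧ q.2 = 1 ∧ lt q.1 p.1) ∨
    (p.2 = 0 ∧ q.2 = 1 ∧ lt p.1 q.1) ∨
    (p.2 = 1 ∧ q.2 = 0 ∧ lt p.1 q.1)

/-- The tournament `H[C]` for an acyclic tournament `C = (A, lt)`. -/
def hRel {A : Type} (lt : A → A → Prop) : A × Fin 2 → A × Fin 2 → Prop :=
  fun p q =>
    (p.2 = 0 ∧ q.2 = 0 ∧ lt p.1 q.1) ∨
    (p.1 = q.1 ∧ p.2 = 0 ∧ q.2 = 1) ∨
    (p.2 = 1 ∧ q.2 = 1 ∧ lt p.1 q.1) ∨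
    (p.2 = 1 ∧ q.2 = 0 ∧ lt q.1 p.1) ∨
    (p.2 = 1 ∧ q.2 = 0 ∧ lt p.1 q.1)

/-- The tournament `K[C]` for an acyclic tournament `C = (A, lt)`. -/
def kRel {A : Type} (lt : A → A → Prop) : A × Fin 2 → A × Fin 2 → Prop :=
  fun p q =>
    (p.2 = 0 ∧ q.2 = 0 ∧ lt p.1 q.1) ∨
    (p.1 = q.1 ∧ p.2 = 0 ∧ q.2 = 1) ∨
    (p.2 = 1 ∧ q.2 = 1 ∧ lt q.1 p.1) ∨
    (p.2 = 1 ∧ q.2 = 0 ∧ lt q.1 p.1) ∨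
    (p.2 = 1 ∧ q.2 = 0 ∧ lt p.1 q.1)

def c3Tour (A : Type) (lt : A → A → Prop) : Tour := ⟨A × Fin 3, c3Rel lt⟩
def vTour (A : Type) (lt : A → A → Prop) : Tour := ⟨Option (A × Fin 2), vRel lt⟩
def tTour (A : Type) (lt : A → A → Prop) : Tour := ⟨A × Fin 2, tRel lt⟩
def uTour (A : Type) (lt : A → A → Prop) : Tour := ⟨A × Fin 2, uRel lt⟩
def hTour (A : Type) (lt : A → A → Prop) : Tour := ⟨A × Fin 2, hRel lt⟩
def kTour (A : Type) (lt : A → A → Prop) : Tour := ⟨A × Fin 2, kRel lt⟩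

/-- The order type `ω`: the natural numbers with the usual strict order. -/
def omegaLT : ℕ → ℕ → Prop := fun m n => m < n

/-- The order type `ω*`: the natural numbers with the reversed strict order. -/
def omegaStarLT : ℕ → ℕ → Prop := fun m n => n < m

/-- The set `𝔅` of twelve tournaments. -/
def frakB : List Tour :=
  [c3Tour ℕ omegaLT, vTour ℕ omegaLT, tTour ℕ omegaLT,
   uTour ℕ omegaLT, hTour ℕ omegaLT, kTour ℕ omegaLT,
   c3Tour ℕ omegaStarLT, vTour ℕ omegaStarLT, tTour ℕ omegaStarLT,
   uTour ℕ omegaStarLT, hTour ℕ omegaStarLT, kTour ℕ omegaStarLT]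

/-- The set `𝔅_{n̲}` of six tournaments built on the acyclic tournament `({0,…,n−1},<)`. -/
def frakBn (n : ℕ) : List Tour :=
  [c3Tour (Fin n) (· < ·), vTour (Fin n) (· < ·), tTour (Fin n) (· < ·),
   uTour (Fin n) (· < ·), hTour (Fin n) (· < ·), kTour (Fin n) (· < ·)]

/-- `B` is a monomorphic part of the tournament `r`: any two finite subsets of the same
size which agree outside `B` induce isomorphic subtournaments. -/
def MonomorphicPart {V : Type u} (r : V → V → Prop) (B : Set V) : Prop :=
  ∀ s t : Finset V, s.card = t.card → ((s : Set V) \ B = (t : Set V) \ B) →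
    InducedIso r s t

/-- The monomorphic component of a vertex `x`: the union (= the largest) of all
monomorphic parts containing `x`. -/
def monomorphicComponent {V : Type u} (r : V → V → Prop) (x : V) : Set V :=
  ⋃₀ {B : Set V | x ∈ B ∧ MonomorphicPart r B}

/-!
An acyclic autonomous set `C` is a monomorphic part: finite acyclic tournaments of the same
size are isomorphic, and since `C` is autonomous, an isomorphism between the parts of two finite
sets inside `C` extends by the identity outside `C`. So the acyclic component of `x` lies in its
monomorphic component.

Conversely, let `B` be a monomorphic part with at least four elements. Exchanging one point of
`B` for another inside a finite set does not change its isomorphism type; comparing triples in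
this way shows that no 3-cycle has two vertices in `B`. Hence `B` is a chain, and adding to `B`
the vertices lying strictly between two of its points gives an acyclic autonomous set. Finally,
monomorphic parts sharing a point have a monomorphic union, so the monomorphic component is itself
a monomorphic part, and when it has four elements it lies in the acyclic component.
-/

variable {V : Type u} {r : V → V → Prop}

namespace IsTournament

variable (hT : IsTournament r)
include hT

theorem irrefl (a : V) : ¬ r a a := hT.1 a

theorem ne_of_rel {a b : V} (h : r a b) : a ≠ b := fun e => hT.1 a (e ▸ h : r a a)

theorem asymm {a b : V} (h : r a b) : ¬ r b a := (hT.2 a b (hT.ne_of_rel h)).1 h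

theorem rel_of_not_rel {a b : V} (hab : a ≠ b) (h : ¬ r a b) : r b a :=
  by_contra fun h' => h ((hT.2 a b hab).2 h')

theorem flip : IsTournament (flip r) :=
  ⟨hT.1, fun x y hxy => hT.2 y x hxy.symm⟩

end IsTournament

theorem InducedIso.refl (s : Finset V) : InducedIso r s s := ⟨Equiv.refl _, fun _ _ => Iff.rfl⟩

theorem InducedIso.trans {s t w : Finset V} (h₁ : InducedIso r s t) (h₂ : InducedIso r t w) :
    InducedIso r s w := by
  obtain ⟨e₁, he₁⟩ := h₁
  obtain ⟨e₂, he₂⟩ := h₂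
  exact ⟨e₁.trans e₂, fun a b => (he₁ a b).trans (he₂ _ _)⟩

theorem InducedIso.flip {s t : Finset V} (h : InducedIso r s t) : InducedIso (flip r) s t := by
  obtain ⟨e, he⟩ := h
  exact ⟨e, fun a b => he b a⟩

def IsoOn (r : V → V → Prop) (f : V → V) (s t : Set V) : Prop :=
  Set.BijOn f s t ∧ ∀ a ∈ s, ∀ b ∈ s, (r a b ↔ r (f a) (f b))

theorem IsoOn.inducedIso {f : V → V} {s t : Finset V} (h : IsoOn r f s t) : InducedIso r s t :=
  ⟨h.1.equiv f, fun a b => h.2 a a.2 b b.2⟩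

theorem IsoOn.congr {f g : V → V} {s t : Set V} (h : IsoOn r f s t) (hfg : Set.EqOn f g s) :
    IsoOn r g s t :=
  ⟨h.1.congr hfg, fun a ha b hb => by rw [← hfg ha, ← hfg hb]; exact h.2 a ha b hb⟩

theorem AcyclicSet.mono {A B : Set V} (h : AcyclicSet r B) (hAB : A ⊆ B) : AcyclicSet r A :=
  fun ⟨a, ha, b, hb, c, hc, hcyc⟩ => h ⟨a, hAB ha, b, hAB hb, c, hAB hc, hcyc⟩

theorem AcyclicSet.rel_trans (hT : IsTournament r) {A : Set V} (hA : AcyclicSet r A) {a b c : V}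
    (ha : a ∈ A) (hb : b ∈ A) (hc : c ∈ A) (hab : r a b) (hbc : r b c) : r a c := by
  by_contra hac
  have hne : a ≠ c := fun e => hT.asymm hab (e ▸ hbc)
  exact hA ⟨a, ha, b, hb, c, hc, hab, hbc, hT.rel_of_not_rel hne hac⟩

theorem AcyclicSet.exists_sink (hT : IsTournament r) {s : Finset V} (hs : AcyclicSet r ↑s)
    (hne : s.Nonempty) : ∃ a ∈ s, ∀ z ∈ s, ¬ r a z := by
  classical
  -- a vertex of minimal out-degree is a sink, by transitivity
  obtain ⟨a, ha, hmin⟩ := s.exists_min_image (fun a => (s.filter (r a ·)).card) hne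
  refine ⟨a, ha, fun z hz haz => (hmin z hz).not_gt (Finset.card_lt_card ?_)⟩
  refine (Finset.ssubset_iff_of_subset fun y hy => ?_).2 ⟨z, ?_, ?_⟩
  · simp only [Finset.mem_filter] at hy ⊢
    exact ⟨hy.1, hs.rel_trans hT ha hz hy.1 haz hy.2⟩
  · simp [hz, haz]
  · simp [hT.irrefl z]

theorem AcyclicSet.exists_isoOn (hT : IsTournament r) {s t : Finset V} (hs : AcyclicSet r ↑s)
    (ht : AcyclicSet r ↑t) (hst : s.card = t.card) : ∃ f, IsoOn r f s t := by
  classical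
  obtain ⟨n, hn⟩ : ∃ n, s.card = n := ⟨_, rfl⟩
  induction n generalizing s t with
  | zero =>
    rw [Finset.card_eq_zero.1 hn, Finset.card_eq_zero.1 (hst ▸ hn : t.card = 0)]
    exact ⟨id, Set.bijOn_id _, fun _ _ _ _ => Iff.rfl⟩
  | succ n ih =>
    -- match a sink of `s` with a sink of `t` and recurse on the rest
    obtain ⟨a, ha, has⟩ := hs.exists_sink hT (Finset.card_pos.1 (by omega))
    obtain ⟨b, hb, hbt⟩ := ht.exists_sink hT (Finset.card_pos.1 (by omega))
    obtain ⟨f, hf, hfr⟩ := ih (s := s.erase a) (t := t.erase b) (hs.mono (by simp))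
      (ht.mono (by simp)) (by simp [ha, hb, hst]) (by simp [ha, hn])
    set g := Function.update f a b
    have hga : g a = b := Function.update_self ..
    have hfg : Set.EqOn f g ↑(s.erase a) := fun v hv =>
      (Function.update_of_ne (Finset.ne_of_mem_erase hv) _ _).symm
    have hgt : ∀ v ∈ s, v ≠ a → g v ∈ t ∧ g v ≠ b := fun v hv hva => by
      have := hfg (Finset.mem_erase.2 ⟨hva, hv⟩) ▸ hf.mapsTo (Finset.mem_erase.2 ⟨hva, hv⟩)
      exact ⟨Finset.mem_of_mem_erase this, Finset.ne_of_mem_erase this⟩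
    have hbij : Set.BijOn g s t := by
      simpa [hga, Set.insert_eq_of_mem, ha, hb] using
        (hf.congr hfg).insert (a := a) (by simp [hga])
    refine ⟨g, hbij, fun v hv w hw => ?_⟩
    by_cases hva : v = a <;> by_cases hwa : w = a
    · rw [hva, hwa]
      exact iff_of_false (hT.irrefl a) (hT.irrefl _)
    · rw [hva, hga]
      exact iff_of_false (has w hw) (hbt _ (hgt w hw hwa).1)
    · rw [hwa, hga]
      exact iff_of_true (hT.rel_of_not_rel (Ne.symm hva) (has v hv))
        (hT.rel_of_not_rel (hgt v hv hva).2.symm (hbt _ (hgt v hv hva).1))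
    · rw [← hfg (Finset.mem_erase.2 ⟨hva, hv⟩), ← hfg (Finset.mem_erase.2 ⟨hwa, hw⟩)]
      exact hfr v (Finset.mem_erase.2 ⟨hva, hv⟩) w (Finset.mem_erase.2 ⟨hwa, hw⟩)

theorem Autonomous.rel_iff_rel_left (hT : IsTournament r) {A : Set V} (hA : Autonomous r A)
    {x x' y : V} (hx : x ∈ A) (hx' : x' ∈ A) (hy : y ∉ A) : r y x ↔ r y x' := by
  rw [hT.2 y x (fun e => hy (e ▸ hx)), hT.2 y x' (fun e => hy (e ▸ hx')), hA x hx x' hx' y hy]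

theorem IsoOn.union_of_autonomous (hT : IsTournament r) {C s t D : Set V} {f : V → V}
    (hC : Autonomous r C) (hf : IsoOn r f s t) (hs : s ⊆ C) (ht : t ⊆ C)
    (hD : Disjoint D C) (hfD : Set.EqOn f id D) : IsoOn r f (s ∪ D) (t ∪ D) := by
  have hDC : ∀ v ∈ D, v ∉ C := fun v hv hvC => Set.disjoint_left.1 hD hv hvC
  have hbD : Set.BijOn f D D := (Set.bijOn_id D).congr hfD.symm
  refine ⟨hf.1.union hbD ?_, ?_⟩
  · refine (Set.injOn_union (hD.symm.mono_left hs)).2 ⟨hf.1.injOn, hbD.injOn, ?_⟩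
    intro a ha b hb hab
    exact hDC b hb (by simpa [hfD hb, hab] using ht (hf.1.mapsTo ha))
  rintro a (ha | ha) b (hb | hb)
  · exact hf.2 a ha b hb
  · rw [hfD hb]
    exact hC a (hs ha) (f a) (ht (hf.1.mapsTo ha)) b (hDC b hb)
  · rw [hfD ha]
    exact hC.rel_iff_rel_left hT (hs hb) (ht (hf.1.mapsTo hb)) (hDC a ha)
  · rw [hfD ha, hfD hb]
    rfl

theorem Autonomous.monomorphicPart (hT : IsTournament r) {C : Set V} (hC : Autonomous r C)
    (hC' : AcyclicSet r C) : MonomorphicPart r C := by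
  classical
  intro s t hst hdiff
  have hcoe : ∀ w : Finset V, (↑(w.filter (· ∉ C)) : Set V) = ↑w \ C := fun w => by
    ext
    simp
  have hD : t.filter (· ∉ C) = s.filter (· ∉ C) :=
    Finset.coe_injective (by rw [hcoe, hcoe, hdiff])
  have hcard : (s.filter (· ∈ C)).card = (t.filter (· ∈ C)).card := by
    have := s.card_filter_add_card_filter_not (· ∈ C)
    have := t.card_filter_add_card_filter_not (· ∈ C)
    rw [hD] at this
    omega
  have hsC : ↑(s.filter (· ∈ C)) ⊆ C := fun v hv => (Finset.mem_filter.1 hv).2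
  have htC : ↑(t.filter (· ∈ C)) ⊆ C := fun v hv => (Finset.mem_filter.1 hv).2
  obtain ⟨f, hf⟩ := AcyclicSet.exists_isoOn hT (hC'.mono hsC) (hC'.mono htC) hcard
  have hg := (hf.congr (g := fun v => if v ∈ s.filter (· ∈ C) then f v else v)
      fun v hv => (if_pos hv).symm).union_of_autonomous hT hC hsC htC
    (D := ↑(s.filter (· ∉ C))) (by rw [hcoe]; exact Set.disjoint_sdiff_left)
    (fun v hv => if_neg fun hv' => (Finset.mem_filter.1 hv).2 (Finset.mem_filter.1 hv').2)
  rw [← Finset.coe_union, ← Finset.coe_union, Finset.filter_union_filter_not_eq, ← hD,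
    Finset.filter_union_filter_not_eq] at hg
  exact hg.inducedIso

theorem autonomous_singleton (x : V) : Autonomous r {x} := by
  rintro a rfl b rfl y -
  rfl

theorem acyclicSet_singleton (hT : IsTournament r) (x : V) : AcyclicSet r {x} := by
  rintro ⟨a, rfl, b, rfl, -, -, hab, -⟩
  exact hT.irrefl _ hab

theorem autonomous_sUnion {S : Set (Set V)} {x : V} (hS : ∀ A ∈ S, x ∈ A ∧ Autonomous r A) :
    Autonomous r (⋃₀ S) := by
  rintro a ⟨A, hA, ha⟩ b ⟨A', hA', hb⟩ y hy
  exact ((hS A hA).2 a ha x (hS A hA).1 y fun h => hy ⟨A, hA, h⟩).trans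
    ((hS A' hA').2 x (hS A' hA').1 b hb y fun h => hy ⟨A', hA', h⟩)

theorem Autonomous.union {A A' : Set V} {x : V} (hA : Autonomous r A) (hA' : Autonomous r A')
    (hx : x ∈ A) (hx' : x ∈ A') : Autonomous r (A ∪ A') := by
  rw [← Set.sUnion_pair]
  exact autonomous_sUnion (x := x) (by rintro B (rfl | rfl) <;> simp_all)

theorem Autonomous.mem_of_rel_of_rel (hT : IsTournament r) {A : Set V} (hA : Autonomous r A)
    {a b c : V} (ha : a ∈ A) (hb : b ∈ A) (hbc : r b c) (hca : r c a) : c ∈ A :=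
  by_contra fun hc => hT.asymm ((hA a ha b hb c hc).2 hbc) hca

theorem mem_acyclicComponent (hT : IsTournament r) (x : V) : x ∈ acyclicComponent r x :=
  ⟨{x}, ⟨rfl, autonomous_singleton x, acyclicSet_singleton hT x⟩, rfl⟩

theorem subset_acyclicComponent {A : Set V} {x : V} (hx : x ∈ A) (hA : Autonomous r A)
    (hA' : AcyclicSet r A) : A ⊆ acyclicComponent r x :=
  Set.subset_sUnion_of_mem ⟨hx, hA, hA'⟩

theorem autonomous_acyclicComponent (x : V) : Autonomous r (acyclicComponent r x) :=
  autonomous_sUnion fun _ hA => ⟨hA.1, hA.2.1⟩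

theorem acyclicSet_acyclicComponent (hT : IsTournament r) (x : V) :
    AcyclicSet r (acyclicComponent r x) := by
  rintro ⟨a, ⟨A, ⟨hxA, hA, hA'⟩, ha⟩, b, ⟨B, ⟨hxB, hB, hB'⟩, hb⟩, c, -, hab, hbc, hca⟩
  rcases (hA.union hB hxA hxB).mem_of_rel_of_rel hT (Or.inl ha) (Or.inr hb) hbc hca with hc | hc
  · exact hA' ⟨a, ha, b, hA.mem_of_rel_of_rel hT hc ha hab hbc, c, hc, hab, hbc, hca⟩
  · exact hB' ⟨a, hB.mem_of_rel_of_rel hT hb hc hca hab, b, hb, c, hc, hab, hbc, hca⟩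

theorem MonomorphicPart.flip {B : Set V} (hB : MonomorphicPart r B) :
    MonomorphicPart (flip r) B :=
  fun s t hst hdiff => (hB s t hst hdiff).flip

theorem MonomorphicPart.subset_monomorphicComponent {B : Set V} {x : V}
    (hB : MonomorphicPart r B) (hx : x ∈ B) : B ⊆ monomorphicComponent r x :=
  Set.subset_sUnion_of_mem ⟨hx, hB⟩

theorem mem_monomorphicComponent (hT : IsTournament r) (x : V) : x ∈ monomorphicComponent r x :=
  (autonomous_singleton x).monomorphicPart hT (acyclicSet_singleton hT x)
    |>.subset_monomorphicComponent rfl rfl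

section DecidableEq

variable [DecidableEq V]

theorem MonomorphicPart.inducedIso_insert {B : Set V} (hB : MonomorphicPart r B) {u : Finset V}
    {a b : V} (ha : a ∈ B) (hb : b ∈ B) (hau : a ∉ u) (hbu : b ∉ u) :
    InducedIso r (insert a u) (insert b u) :=
  hB _ _ (by rw [Finset.card_insert_of_notMem hau, Finset.card_insert_of_notMem hbu])
    (by simp [ha, hb])

theorem monomorphicPart_of_inducedIso_insert {B : Set V}
    (h : ∀ (u : Finset V) (a b : V), a ∈ B → b ∈ B → a ∉ u → b ∉ u →
      InducedIso r (insert a u) (insert b u)) :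
    MonomorphicPart r B := by
  have mem_B : ∀ {s t : Finset V}, (↑s : Set V) \ B = ↑t \ B → ∀ v ∈ s, v ∉ t → v ∈ B :=
    fun {_ t} h v hv hvt => by_contra fun hvB => hvt (h ▸ ⟨hv, hvB⟩ : v ∈ (↑t : Set V) \ B).1
  intro s t hst hdiff
  obtain ⟨n, hn⟩ : ∃ n, (s \ t).card = n := ⟨_, rfl⟩
  induction n generalizing s with
  | zero =>
    rw [Finset.eq_of_subset_of_card_le
      (Finset.sdiff_eq_empty_iff_subset.1 (Finset.card_eq_zero.1 hn)) hst.ge]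
    exact .refl t
  | succ n ih =>
    -- exchange one element of `s \ t` for one of `t \ s`
    obtain ⟨a, ha⟩ := Finset.card_pos.1 (by omega : 0 < (s \ t).card)
    obtain ⟨b, hb⟩ : (t \ s).Nonempty := by
      rw [Finset.sdiff_nonempty]
      intro hts
      rw [Finset.eq_of_subset_of_card_le hts hst.le] at ha
      exact (Finset.mem_sdiff.1 ha).2 (Finset.mem_sdiff.1 ha).1
    rw [Finset.mem_sdiff] at ha hb
    have haB := mem_B hdiff a ha.1 ha.2
    have hbB := mem_B hdiff.symm b hb.1 hb.2
    have hbs : b ∉ s.erase a := fun h => hb.2 (Finset.mem_of_mem_erase h)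
    have hsb := h (s.erase a) a b haB hbB (Finset.notMem_erase a s) hbs
    rw [Finset.insert_erase ha.1] at hsb
    refine hsb.trans (ih _ ?_ ?_ ?_)
    · rw [Finset.card_insert_of_notMem hbs, Finset.card_erase_add_one ha.1, hst]
    · rw [← hdiff, Finset.coe_insert, Finset.coe_erase, Set.insert_sdiff_of_mem _ hbB,
        Set.sdiff_sdiff, Set.singleton_union, Set.insert_eq_of_mem haB]
    · rw [Finset.insert_sdiff_of_mem _ hb.1, Finset.erase_sdiff_comm,
        Finset.card_erase_of_mem (Finset.mem_sdiff.2 ha), hn, Nat.add_sub_cancel]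

theorem MonomorphicPart.inducedIso_insert_of_mem_inter {P Q : Set V} (hP : MonomorphicPart r P)
    (hQ : MonomorphicPart r Q) {x : V} (hxP : x ∈ P) (hxQ : x ∈ Q) {u : Finset V} {a b : V}
    (ha : a ∈ P) (hb : b ∈ Q) (hau : a ∉ u) (hbu : b ∉ u) :
    InducedIso r (insert a u) (insert b u) := by
  rcases eq_or_ne a b with rfl | hab
  · exact .refl _
  by_cases hxu : x ∈ u
  · -- swap `x` for `b` inside `Q`, then `a` for `x` inside `P`
    have hxa : x ≠ a := fun e => hau (e ▸ hxu)
    have hxb : x ≠ b := fun e => hbu (e ▸ hxu)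
    have hau' : a ∉ u.erase x := fun h => hau (Finset.mem_of_mem_erase h)
    have hbu' : b ∉ u.erase x := fun h => hbu (Finset.mem_of_mem_erase h)
    rw [← Finset.insert_erase hxu, Finset.insert_comm a, Finset.insert_comm b]
    have h₁ := hQ.inducedIso_insert hxQ hb (u := insert a (u.erase x)) (by simp [hxa])
      (by simp [hab.symm, hbu'])
    have h₂ := hP.inducedIso_insert ha hxP (u := insert b (u.erase x)) (by simp [hab, hau'])
      (by simp [hxb])
    rw [Finset.insert_comm b a] at h₁
    exact h₁.trans h₂
  · exact (hP.inducedIso_insert ha hxP hau hxu).trans (hQ.inducedIso_insert hxQ hb hxu hbu)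

theorem MonomorphicPart.union {P Q : Set V} (hP : MonomorphicPart r P) (hQ : MonomorphicPart r Q)
    {x : V} (hxP : x ∈ P) (hxQ : x ∈ Q) : MonomorphicPart r (P ∪ Q) := by
  refine monomorphicPart_of_inducedIso_insert fun u a b ha hb hau hbu => ?_
  rcases ha with ha | ha <;> rcases hb with hb | hb
  exacts [hP.inducedIso_insert ha hb hau hbu,
    hP.inducedIso_insert_of_mem_inter hQ hxP hxQ ha hb hau hbu,
    hQ.inducedIso_insert_of_mem_inter hP hxQ hxP ha hb hau hbu,
    hQ.inducedIso_insert ha hb hau hbu]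

theorem exists_monomorphicPart_superset (hT : IsTournament r) (x : V) (w : Finset V)
    (hw : ↑w ⊆ monomorphicComponent r x) :
    ∃ B, MonomorphicPart r B ∧ x ∈ B ∧ ↑w ⊆ B := by
  induction w using Finset.induction_on with
  | empty =>
    exact ⟨{x}, (autonomous_singleton x).monomorphicPart hT (acyclicSet_singleton hT x), rfl,
      by simp⟩
  | insert y w _ ih =>
    rw [Finset.coe_insert, Set.insert_subset_iff] at hw
    obtain ⟨B, hB, hxB, hwB⟩ := ih hw.2
    obtain ⟨B', ⟨hxB', hB'⟩, hyB'⟩ := hw.1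
    exact ⟨B ∪ B', hB.union hB' hxB hxB', Or.inl hxB, by
      rw [Finset.coe_insert, Set.insert_subset_iff]
      exact ⟨Or.inr hyB', hwB.trans Set.subset_union_left⟩⟩

end DecidableEq

theorem monomorphicPart_monomorphicComponent (hT : IsTournament r) (x : V) :
    MonomorphicPart r (monomorphicComponent r x) := by
  classical
  -- only the finitely many points of `s ∪ t` matter, and they lie in one monomorphic part
  intro s t hst hdiff
  obtain ⟨B, hB, hxB, hwB⟩ := exists_monomorphicPart_superset hT x
    ((s ∪ t).filter (· ∈ monomorphicComponent r x)) (fun v hv => (Finset.mem_filter.1 hv).2)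
  have hB_diff : ∀ w ⊆ s ∪ t, (↑w : Set V) \ B = ↑w \ monomorphicComponent r x := by
    intro w hw
    ext v
    refine ⟨fun ⟨hv, hvB⟩ => ⟨hv, fun hvx => hvB (hwB ?_)⟩,
      fun ⟨hv, hvx⟩ => ⟨hv, fun hvB => hvx (hB.subset_monomorphicComponent hxB hvB)⟩⟩
    exact Finset.mem_filter.2 ⟨hw hv, hvx⟩
  exact hB s t hst (by rw [hB_diff s Finset.subset_union_left,
    hB_diff t Finset.subset_union_right, hdiff])

def SinkFree (r : V → V → Prop) (s : Finset V) : Prop := ∀ v ∈ s, ∃ w ∈ s, r v w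

theorem InducedIso.sinkFree {s t : Finset V} (h : InducedIso r s t) (hs : SinkFree r s) :
    SinkFree r t := by
  obtain ⟨e, he⟩ := h
  intro v hv
  obtain ⟨w, hw, hvw⟩ := hs _ (e.symm ⟨v, hv⟩).2
  exact ⟨_, (e ⟨w, hw⟩).2, by simpa using (he _ ⟨w, hw⟩).1 hvw⟩

section DecidableEq

variable [DecidableEq V]

theorem sinkFree_of_cycle {a b c : V} (hab : r a b) (hbc : r b c) (hca : r c a) :
    SinkFree r {a, b, c} := by
  simp only [SinkFree, Finset.mem_insert, Finset.mem_singleton, forall_eq_or_imp,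
    forall_eq, exists_eq_or_imp, exists_eq_left]
  tauto

theorem SinkFree.rel_iff (hT : IsTournament r) {a b c : V} (h : SinkFree r {a, b, c}) :
    (r a b ↔ r b c) ∧ (r b c ↔ r c a) := by
  simp only [SinkFree, Finset.mem_insert, Finset.mem_singleton, forall_eq_or_imp,
    forall_eq, exists_eq_or_imp, exists_eq_left] at h
  have := hT.irrefl a; have := hT.irrefl b; have := hT.irrefl c
  have : r a b → ¬ r b a := hT.asymm
  have : r b c → ¬ r c b := hT.asymm
  have : r c a → ¬ r a c := hT.asymm
  tauto

theorem MonomorphicPart.sinkFree_insert {B : Set V} (hB : MonomorphicPart r B) {u : Finset V}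
    {a b : V} (ha : a ∈ B) (hb : b ∈ B) (hau : a ∉ u) (hbu : b ∉ u)
    (h : SinkFree r (insert a u)) : SinkFree r (insert b u) :=
  (hB.inducedIso_insert ha hb hau hbu).sinkFree h

theorem exists_mem_notMem_of_four_le_encard {B : Set V} (hB : 4 ≤ B.encard) (a b c : V) :
    ∃ d ∈ B, d ∉ ({a, b, c} : Finset V) := by
  by_contra! h
  have h3 : B.encard ≤ 3 := (Set.encard_le_encard h).trans (by
    rw [Set.encard_coe_eq_coe_finsetCard]
    exact_mod_cast Finset.card_le_three)
  have := hB.trans h3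
  norm_num at this

end DecidableEq

def intervalClosure (r : V → V → Prop) (B : Set V) : Set V :=
  B ∪ {y | (∃ d ∈ B, r d y) ∧ ∃ u ∈ B, r y u}

theorem intervalClosure_flip (B : Set V) : intervalClosure (flip r) B = intervalClosure r B := by
  ext
  simp only [intervalClosure, Set.mem_union, Set.mem_ofPred_eq, flip, and_comm]

namespace MonomorphicPart

variable {B : Set V} (hB : MonomorphicPart r B) (hT : IsTournament r)
include hB hT

theorem rel_of_forall_rel {p w : V} (hp : p ∈ intervalClosure r B) (hw : w ∉ B)
    (hBw : ∀ b ∈ B, r b w) : r p w := by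
  classical
  by_cases hpB : p ∈ B
  · exact hBw p hpB
  obtain ⟨⟨d, hd, hdp⟩, u, hu, hpu⟩ := hp.resolve_left hpB
  by_contra hpw
  have hwp := hT.rel_of_not_rel (by rintro rfl; exact hT.asymm hpu (hBw u hu)) hpw
  -- swapping `u` for `d` in the 3-cycle `{u, w, p}` would make `p` a sink
  have := hB.sinkFree_insert hu hd (u := {w, p})
    (by simp [ne_of_mem_of_not_mem hu hw, ne_of_mem_of_not_mem hu hpB])
    (by simp [ne_of_mem_of_not_mem hd hw, ne_of_mem_of_not_mem hd hpB])
    (sinkFree_of_cycle (hBw u hu) hwp hpu)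
  exact hT.asymm hdp ((this.rel_iff hT).2.1 hwp)

theorem autonomous_intervalClosure : Autonomous r (intervalClosure r B) := by
  intro p hp q hq w hw
  have hwB : w ∉ B := fun h => hw (Or.inl h)
  by_cases hdw : ∃ d ∈ B, r d w
  · have hBw : ∀ b ∈ B, r b w := fun b hb => by_contra fun h =>
      hw (Or.inr ⟨hdw, b, hb, hT.rel_of_not_rel (ne_of_mem_of_not_mem hb hwB) h⟩)
    exact iff_of_true (hB.rel_of_forall_rel hT hp hwB hBw) (hB.rel_of_forall_rel hT hq hwB hBw)
  · have hwB' : ∀ b ∈ B, r w b := fun b hb =>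
      hT.rel_of_not_rel (ne_of_mem_of_not_mem hb hwB) fun h => hdw ⟨b, hb, h⟩
    rw [← intervalClosure_flip] at hp hq
    exact iff_of_false (hT.asymm (hB.flip.rel_of_forall_rel hT.flip hp hwB hwB'))
      (hT.asymm (hB.flip.rel_of_forall_rel hT.flip hq hwB hwB'))

variable (hB4 : 4 ≤ B.encard)
include hB4

theorem not_cycle {u v y : V} (hu : u ∈ B) (hv : v ∈ B) :
    ¬ (r u v ∧ r v y ∧ r y u) := by
  classical
  rintro ⟨huv, hvy, hyu⟩
  obtain ⟨d, hd, hduvy⟩ := exists_mem_notMem_of_four_le_encard hB4 u v y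
  simp only [Finset.mem_insert, Finset.mem_singleton, not_or] at hduvy
  -- the 3-cycles `{d, v, y}` and `{d, y, u}` orient the edge `dy` both ways
  have h₁ := hB.sinkFree_insert hu hd (u := {v, y})
    (by simp [hT.ne_of_rel huv, (hT.ne_of_rel hyu).symm]) (by simp [hduvy])
    (sinkFree_of_cycle huv hvy hyu)
  have h₂ := hB.sinkFree_insert hv hd (u := {y, u})
    (by simp [hT.ne_of_rel hvy, (hT.ne_of_rel huv).symm]) (by simp [hduvy])
    (sinkFree_of_cycle hvy hyu huv)
  exact hT.asymm ((h₂.rel_iff hT).1.2 hyu) ((h₁.rel_iff hT).2.1 hvy)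

theorem rel_of_rel_of_rel {d u y : V} (hd : d ∈ B) (hu : u ∈ B)
    (hdy : r d y) (hyu : r y u) : r d u :=
  by_contra fun h => hB.not_cycle hT hB4 hu hd
    ⟨hT.rel_of_not_rel (fun e => hT.asymm hdy (e ▸ hyu)) h, hdy, hyu⟩

theorem exists_forall_rel (w : Finset V)
    (hw : ∀ y ∈ w, y ∉ B ∧ ∃ d ∈ B, r d y) : ∃ d ∈ B, ∀ y ∈ w, r d y := by
  classical
  induction w using Finset.induction_on with
  | empty =>
    obtain ⟨d, hd⟩ : B.Nonempty := Set.nonempty_of_encard_ne_zero fun h => by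
      rw [h] at hB4
      exact absurd hB4 (by norm_num)
    exact ⟨d, hd, by simp⟩
  | insert y w _ ih =>
    simp only [Finset.forall_mem_insert] at hw ⊢
    obtain ⟨d, hd, hdw⟩ := ih hw.2
    obtain ⟨hyB, d', hd', hd'y⟩ := hw.1
    by_cases hdy : r d y
    · exact ⟨d, hd, hdy, hdw⟩
    · -- `d' → y → d` forces `d' → d`, so `d'` is below everything `d` is below
      have hd'd := hB.rel_of_rel_of_rel hT hB4 hd' hd hd'y
        (hT.rel_of_not_rel (fun e => hyB (e ▸ hd)) hdy)
      refine ⟨d', hd', hd'y, fun z hz => by_contra fun h => hB.not_cycle hT hB4 hd' hd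
        ⟨hd'd, hdw z hz, hT.rel_of_not_rel (fun e => (hw.2 z hz).1 (e ▸ hd')) h⟩⟩

theorem not_cycle_of_mem_of_not_mem {p q z : V} (hp : p ∈ B) (hq : q ∉ B) (hz : z ∉ B)
    (hdz : ∃ d ∈ B, r d z) : ¬ (r p q ∧ r q z ∧ r z p) := by
  classical
  rintro ⟨hpq, hqz, hzp⟩
  obtain ⟨d, hd, hdqz⟩ := hB.exists_forall_rel hT hB4 {q, z}
    (by simp [hq, hz, hdz]; exact ⟨p, hp, hpq⟩)
  -- `{d, q, z}` must be a 3-cycle like `{p, q, z}`, yet `d` is below both `q` and `z`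
  have := hB.sinkFree_insert hp hd (u := {q, z})
    (by simp [ne_of_mem_of_not_mem hp hq, ne_of_mem_of_not_mem hp hz])
    (by simp [ne_of_mem_of_not_mem hd hq, ne_of_mem_of_not_mem hd hz])
    (sinkFree_of_cycle hpq hqz hzp)
  exact hT.asymm (hdqz z (by simp)) ((this.rel_iff hT).2.1 hqz)

theorem not_cycle_of_mem_sdiff {p q z : V} (hp : p ∈ intervalClosure r B \ B)
    (hq : q ∈ intervalClosure r B \ B) (hz : z ∈ intervalClosure r B \ B) :
    ¬ (r p q ∧ r q z ∧ r z p) := by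
  classical
  rintro ⟨hpq, hqz, hzp⟩
  have hcut : ∀ y ∈ ({p, q, z} : Finset V),
      y ∉ B ∧ (∃ d ∈ B, r d y) ∧ ∃ u ∈ B, r y u := by
    simp only [Finset.mem_insert, Finset.mem_singleton]
    rintro y (rfl | rfl | rfl)
    exacts [⟨hp.2, hp.1.resolve_left hp.2⟩, ⟨hq.2, hq.1.resolve_left hq.2⟩,
      ⟨hz.2, hz.1.resolve_left hz.2⟩]
  obtain ⟨f, hf, hfpqz⟩ := hB.exists_forall_rel hT hB4 _
    fun y hy => ⟨(hcut y hy).1, (hcut y hy).2.1⟩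
  obtain ⟨g, hg, hgpqz⟩ := hB.flip.exists_forall_rel hT.flip hB4 _
    fun y hy => ⟨(hcut y hy).1, (hcut y hy).2.2⟩
  -- `{f, p, q, z}` has no sink, but swapping `f` for `g` creates the sink `g`
  have hsink : SinkFree r {f, p, q, z} := by
    have := hfpqz p (by simp)
    simp only [SinkFree, Finset.mem_insert, Finset.mem_singleton, forall_eq_or_imp, forall_eq,
      exists_eq_or_imp, exists_eq_left]
    tauto
  obtain ⟨v, hv, hgv⟩ := hB.sinkFree_insert hf hg (u := {p, q, z})
    (by simp [ne_of_mem_of_not_mem hf hp.2, ne_of_mem_of_not_mem hf hq.2,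
      ne_of_mem_of_not_mem hf hz.2])
    (by simp [ne_of_mem_of_not_mem hg hp.2, ne_of_mem_of_not_mem hg hq.2,
      ne_of_mem_of_not_mem hg hz.2])
    hsink g (by simp)
  rw [Finset.mem_insert] at hv
  rcases hv with rfl | hv
  · exact hT.irrefl _ hgv
  · exact hT.asymm (hgpqz v hv) hgv

theorem acyclicSet_intervalClosure : AcyclicSet r (intervalClosure r B) := by
  rintro ⟨p, hp, q, hq, z, hz, hpq, hqz, hzp⟩
  have below : ∀ {y}, y ∈ intervalClosure r B → y ∉ B → ∃ d ∈ B, r d y :=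
    fun hy hyB => (hy.resolve_left hyB).1
  by_cases hpB : p ∈ B <;> by_cases hqB : q ∈ B <;> by_cases hzB : z ∈ B
  · exact hB.not_cycle hT hB4 hpB hqB ⟨hpq, hqz, hzp⟩
  · exact hB.not_cycle hT hB4 hpB hqB ⟨hpq, hqz, hzp⟩
  · exact hB.not_cycle hT hB4 hzB hpB ⟨hzp, hpq, hqz⟩
  · exact hB.not_cycle_of_mem_of_not_mem hT hB4 hpB hqB hzB (below hz hzB) ⟨hpq, hqz, hzp⟩
  · exact hB.not_cycle hT hB4 hqB hzB ⟨hqz, hzp, hpq⟩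
  · exact hB.not_cycle_of_mem_of_not_mem hT hB4 hqB hzB hpB (below hp hpB) ⟨hqz, hzp, hpq⟩
  · exact hB.not_cycle_of_mem_of_not_mem hT hB4 hzB hpB hqB (below hq hqB) ⟨hzp, hpq, hqz⟩
  · exact hB.not_cycle_of_mem_sdiff hT hB4 ⟨hp, hpB⟩ ⟨hq, hqB⟩ ⟨hz, hzB⟩ ⟨hpq, hqz, hzp⟩

theorem subset_acyclicComponent {x : V} (hx : x ∈ B) : B ⊆ acyclicComponent r x :=
  Set.subset_union_left.trans <| _root_.subset_acyclicComponent (Or.inl hx)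
    (hB.autonomous_intervalClosure hT) (hB.acyclicSet_intervalClosure hT hB4)

end MonomorphicPart

theorem acyclicComponent_subset_monomorphicComponent (hT : IsTournament r) (x : V) :
    acyclicComponent r x ⊆ monomorphicComponent r x :=
  ((autonomous_acyclicComponent x).monomorphicPart hT (acyclicSet_acyclicComponent hT x))
    |>.subset_monomorphicComponent (mem_acyclicComponent hT x)

theorem monomorphicComponent_subset_acyclicComponent (hT : IsTournament r) {x : V}
    (h4 : 4 ≤ (monomorphicComponent r x).encard) :
    monomorphicComponent r x ⊆ acyclicComponent r x :=
  (monomorphicPart_monomorphicComponent hT x).subset_acyclicComponent hT h4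
    (mem_monomorphicComponent hT x)

/-- For a subset `A` with at least 4 elements, `A` is an acyclic
component of the tournament iff `A` is a monomorphic component. -/
theorem acyclic_component_iff_monomorphic_component {V : Type u} (r : V → V → Prop)
    (hT : IsTournament r) (A : Set V) (hA : 4 ≤ A.encard) :
    (∃ x : V, A = acyclicComponent r x) ↔ (∃ x : V, A = monomorphicComponent r x) := by
  constructor
  · rintro ⟨x, rfl⟩
    have hsub := acyclicComponent_subset_monomorphicComponent hT x
    exact ⟨x, hsub.antisymm (monomorphicComponent_subset_acyclicComponent hT
      (hA.trans (Set.encard_le_encard hsub)))⟩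
  · rintro ⟨x, rfl⟩
    exact ⟨x, (monomorphicComponent_subset_acyclicComponent hT hA).antisymm
      (acyclicComponent_subset_monomorphicComponent hT x)⟩
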